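/- Let H(x) be the 2×2 matrix with entries H_{1,1}(x) = h_{1,1}(x), H_{1,2}(x) = h_{1,2}(x), H_{2,1}(x) = h_{2,1}(x), H_{2,2}(x) = 0 (the paper's filters built from p). Then the product of three consecutive scaled factors ∏_{j=1}^{3} H(x/2^j) is lower triangular: its (1,2) entry vanishes identically in x. -/
import Mathlib


/-- The 1-periodization of a set `S ⊆ ℝ`. -/
def per (S : Set ℝ) : Set ℝ := {x | ∃ k : ℤ, x + k ∈ S}

/-- `h_{1,1}(x) = p(x)` for `x ∈ [-2/7, 2/7)` mod 1 and `0` otherwise. -/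
noncomputable def h11 (p : ℝ → ℝ) : ℝ → ℝ :=
  Set.indicator (per (Set.Ico (-2/7) (2/7))) p

/-- `h_{1,2}(x) = p(x + 1/2)` for `x ∈ [-1/7, 1/7)` mod 1 and `0` otherwise. -/
noncomputable def h12 (p : ℝ → ℝ) : ℝ → ℝ :=
  Set.indicator (per (Set.Ico (-1/7) (1/7))) (fun x => p (x + 1/2))

/-- `h_{2,1}(x) = √2` for `x ∈ ±[3/7, 1/2)` mod 1 and `0` otherwise. -/
noncomputable def h21 : ℝ → ℝ :=
  Set.indicator (per (Set.Ico (3/7) (1/2) ∪ Set.Ico (-1/2) (-3/7))) (fun _ => Real.sqrt 2)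

/-- The 2×2 filter matrix `H(x)` of the paper's example. -/
noncomputable def Hmat (p : ℝ → ℝ) (x : ℝ) : Matrix (Fin 2) (Fin 2) ℝ :=
  !![h11 p x, h12 p x; h21 x, 0]

/-- The product of three consecutive scaled filter matrices
`H(x/2)·H(x/4)·H(x/8)` is lower triangular: its (1,2) entry vanishes for all `x`. -/
theorem stmt10 (p : ℝ → ℝ)
    (hsm : ContDiff ℝ (⊤ : ℕ∞) p)
    (hper : ∀ x, p (x + 1) = p x)
    (heven : ∀ x, p (-x) = p x)
    (hqmf : ∀ x, p x ^ 2 + p (x + 1/2) ^ 2 = 2)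
    (hvan : ∀ x ∈ Set.Icc (1/7 : ℝ) (3/14) ∪ Set.Icc (3/7 : ℝ) (1/2), p x = 0) :
    ∀ x : ℝ, (Hmat p (x/2) * Hmat p (x/4) * Hmat p (x/8)) 0 1 = 0 := by

  intro x
  -- periodicity over integers
  have hperZ : ∀ (y : ℝ) (k : ℤ), p (y + k) = p y := by
    intro y k
    have hp : Function.Periodic p 1 := hper
    simpa using (hp.int_mul k) y
  have hexp : (Hmat p (x/2) * Hmat p (x/4) * Hmat p (x/8)) 0 1
      = (h11 p (x/2) * h11 p (x/4) + h12 p (x/2) * h21 (x/4)) * h12 p (x/8) := by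
    simp [Hmat, Matrix.mul_apply, Fin.sum_univ_two]
  rw [hexp]
  by_cases ht : x/8 ∈ per (Set.Ico (-1/7 : ℝ) (1/7))
  · obtain ⟨k, hk1, hk2⟩ := ht
    have h21z : h21 (x/4) = 0 := by
      apply Set.indicator_of_notMem
      rintro ⟨n, hn | hn⟩
      · obtain ⟨hn1, hn2⟩ := hn
        have d1 : (0 : ℝ) < (n : ℝ) - 2*(k:ℝ) := by linarith
        have d2 : ((n : ℝ) - 2*(k:ℝ)) < 1 := by linarith
        have e1 : (0 : ℤ) < n - 2*k := by exact_mod_cast (by push_cast; linarith : ((0:ℤ):ℝ) < ((n - 2*k : ℤ) : ℝ))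
        have e2 : (n - 2*k : ℤ) < 1 := by exact_mod_cast (by push_cast; linarith : ((n - 2*k : ℤ) : ℝ) < ((1:ℤ):ℝ))
        omega
      · obtain ⟨hn1, hn2⟩ := hn
        have e1 : (-1 : ℤ) < n - 2*k := by exact_mod_cast (by push_cast; linarith : ((-1:ℤ):ℝ) < ((n - 2*k : ℤ) : ℝ))
        have e2 : (n - 2*k : ℤ) < 0 := by exact_mod_cast (by push_cast; linarith : ((n - 2*k : ℤ) : ℝ) < ((0:ℤ):ℝ))
        omega
    rw [h21z, mul_zero, add_zero]
    by_cases h4 : x/2 ∈ per (Set.Ico (-2/7 : ℝ) (2/7))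
    · -- then x/8 + k ∈ [-1/14, 1/14) and h12 p (x/8) = 0
      obtain ⟨m, hm1, hm2⟩ := h4
      have hmk : m = 4*k := by
        have e1 : (-1 : ℤ) < m - 4*k := by exact_mod_cast (by push_cast; linarith : ((-1:ℤ):ℝ) < ((m - 4*k : ℤ) : ℝ))
        have e2 : (m - 4*k : ℤ) < 1 := by exact_mod_cast (by push_cast; linarith : ((m - 4*k : ℤ) : ℝ) < ((1:ℤ):ℝ))
        omega
      subst hmk
      have hnarrow1 : (-1/14 : ℝ) ≤ x/8 + k := by push_cast at hm1 ⊢; linarith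
      have hnarrow2 : x/8 + (k:ℝ) < 1/14 := by push_cast at hm2 ⊢; linarith
      have h12z : h12 p (x/8) = 0 := by
        have hmem : x/8 ∈ per (Set.Ico (-1/7 : ℝ) (1/7)) := ⟨k, hk1, hk2⟩
        rw [h12, Set.indicator_of_mem hmem]
        have : p (x/8 + 1/2) = p (x/8 + 1/2 + k) := (hperZ (x/8 + 1/2) k).symm
        rw [this]
        set s : ℝ := x/8 + 1/2 + k with hs
        have hs1 : (3/7 : ℝ) ≤ s := by rw [hs]; linarith
        have hs2 : s < 4/7 := by rw [hs]; linarith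
        by_cases hhalf : s ≤ 1/2
        · exact hvan s (Or.inr ⟨hs1, hhalf⟩)
        · have h1 : p (1 - s) = p (s - 1) := by simpa [neg_sub] using heven (s - 1)
          have h3 : p s = p (s - 1) := by
            have h2 := hper (s - 1)
            rw [sub_add_cancel] at h2
            exact h2
          rw [h3, ← h1]
          exact hvan (1 - s) (Or.inr ⟨by linarith, by linarith⟩)
      rw [h12z, mul_zero]
    · have : h11 p (x/2) = 0 := Set.indicator_of_notMem h4 p
      rw [this, zero_mul, zero_mul]
  · rw [h12, Set.indicator_of_notMem ht, mul_zero]
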